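/- arXiv:1412.4248 — 3 statements merged into one kernel-verified Lean document; each statement's English description precedes it below -/
import Mathlib

section
/- Let α, β > 0 and let σ be any real 2×2 matrix satisfying σξ·ξ ≥ α|ξ|² and σ⁻¹ξ·ξ ≥ β⁻¹|ξ|² for all ξ ∈ ℝ². Define the complex numbers μ = (σ₂₂ − σ₁₁ − i(σ₁₂ + σ₂₁)) / (1 + Tr σ + det σ) and ν = (1 − det σ + i(σ₁₂ − σ₂₁)) / (1 + Tr σ + det σ). Then there exists a constant K ≥ 1, depending only on α and β, such that |μ| + |ν| ≤ (K − 1)/(K + 1). -/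
/-!
The symmetric part of `σ` is at least `α`, so `σ₁₁, σ₂₂ ≥ α` and
`(σ₁₂ + σ₂₁)² ≤ 4(σ₁₁ - α)(σ₂₂ - α)`. Hence the numerators of `μ` and `ν` have moduli at most
`Tr σ - 2α` and `1 + det σ`, and `|μ| + |ν| ≤ 1 - 2α / (1 + Tr σ + det σ)`. The bound on `σ⁻¹`,
tested at `ξ = σ eⱼ`, gives `|σ eⱼ|² ≤ β σⱼⱼ` for each column, whence
`1 + Tr σ + det σ ≤ (1 + β)²`, and `K = (1 + β)² / α - 1` works.
-/

open Matrix Complex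

/-- The first complex dilatation `μ` associated to the matrix `σ`. -/
noncomputable def muDil (σ : Matrix (Fin 2) (Fin 2) ℝ) : ℂ :=
  ((σ 1 1 : ℂ) - (σ 0 0 : ℂ) - Complex.I * ((σ 0 1 : ℂ) + (σ 1 0 : ℂ))) /
    (1 + (σ.trace : ℂ) + (σ.det : ℂ))

/-- The second complex dilatation `ν` associated to the matrix `σ`. -/
noncomputable def nuDil (σ : Matrix (Fin 2) (Fin 2) ℝ) : ℂ :=
  (1 - (σ.det : ℂ) + Complex.I * ((σ 0 1 : ℂ) - (σ 1 0 : ℂ))) /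
    (1 + (σ.trace : ℂ) + (σ.det : ℂ))

namespace Matrix

def IsCoerciveWith {n : Type*} [Fintype n] (α : ℝ) (σ : Matrix n n ℝ) : Prop :=
  ∀ ξ : n → ℝ, α * (ξ ⬝ᵥ ξ) ≤ (σ *ᵥ ξ) ⬝ᵥ ξ

theorem mulVec_dotProduct_fin_two (σ : Matrix (Fin 2) (Fin 2) ℝ) (x y : ℝ) :
    (σ *ᵥ ![x, y]) ⬝ᵥ ![x, y] = σ 0 0 * (x * x) + (σ 0 1 + σ 1 0) * x * y + σ 1 1 * (y * y) := by
  simp only [mulVec, dotProduct, Fin.sum_univ_two, cons_val_zero, cons_val_one]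
  ring

namespace IsCoerciveWith

section general

variable {n : Type*} [Fintype n] [DecidableEq n] {α : ℝ} {σ : Matrix n n ℝ}

theorem le_apply_self (h : IsCoerciveWith α σ) (i : n) : α ≤ σ i i := by
  simpa [mulVec_single_one] using h (Pi.single i 1)

/-- Test the bound on `σ⁻¹` at `ξ = ση`. -/
theorem mulVec_dotProduct_mulVec_le_of_inv {β : ℝ} (hβ : 0 < β) (hσ : IsUnit σ.det)
    (h : IsCoerciveWith β⁻¹ σ⁻¹) (η : n → ℝ) :
    (σ *ᵥ η) ⬝ᵥ (σ *ᵥ η) ≤ β * ((σ *ᵥ η) ⬝ᵥ η) := by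
  have hη := h (σ *ᵥ η)
  rw [mulVec_mulVec, nonsing_inv_mul σ hσ, one_mulVec, dotProduct_comm η] at hη
  rwa [inv_mul_le_iff₀ hβ] at hη

theorem sum_sq_col_le_of_inv {β : ℝ} (hβ : 0 < β) (hσ : IsUnit σ.det)
    (h : IsCoerciveWith β⁻¹ σ⁻¹) (j : n) :
    ∑ i, σ i j ^ 2 ≤ β * σ j j := by
  have hj := mulVec_dotProduct_mulVec_le_of_inv hβ hσ h (Pi.single j 1)
  rw [mulVec_single_one, dotProduct_single_one, col_apply] at hj
  simpa only [dotProduct, col_apply, sq] using hj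

end general

variable {α : ℝ} {σ : Matrix (Fin 2) (Fin 2) ℝ}

theorem sq_offDiag_add_le (h : IsCoerciveWith α σ) :
    (σ 0 1 + σ 1 0) ^ 2 ≤ 4 * (σ 0 0 - α) * (σ 1 1 - α) := by
  have hdisc := discrim_le_zero (a := σ 0 0 - α) (b := σ 0 1 + σ 1 0) (c := σ 1 1 - α) fun x => by
    have := h ![x, 1]
    rw [mulVec_dotProduct_fin_two] at this
    simp only [dotProduct, Fin.sum_univ_two, cons_val_zero, cons_val_one] at this
    linarith
  rw [discrim] at hdisc
  linarith

theorem sq_offDiag_sub_add_le_det (hα : 0 ≤ α) (h : IsCoerciveWith α σ) :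
    (σ 0 1 - σ 1 0) ^ 2 + 4 * α ^ 2 ≤ 4 * σ.det := by
  have h₀ := h.le_apply_self 0
  have h₁ := h.le_apply_self 1
  rw [det_fin_two]
  nlinarith [h.sq_offDiag_add_le, mul_nonneg hα (sub_nonneg.2 h₀),
    mul_nonneg hα (sub_nonneg.2 h₁)]

theorem det_pos (hα : 0 < α) (h : IsCoerciveWith α σ) : 0 < σ.det := by
  nlinarith [h.sq_offDiag_sub_add_le_det hα.le, sq_nonneg (σ 0 1 - σ 1 0)]

theorem one_add_trace_add_det_le_of_inv {β : ℝ} (hβ : 0 < β) (hσ : IsUnit σ.det)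
    (h : IsCoerciveWith β⁻¹ σ⁻¹) :
    1 + σ.trace + σ.det ≤ (1 + β) ^ 2 := by
  have h₀ := h.sum_sq_col_le_of_inv hβ hσ 0
  have h₁ := h.sum_sq_col_le_of_inv hβ hσ 1
  simp only [Fin.sum_univ_two] at h₀ h₁
  rw [trace_fin_two, det_fin_two]
  nlinarith [sq_nonneg (σ 0 0 - σ 1 1), sq_nonneg (σ 0 1 + σ 1 0), sq_nonneg (σ 1 0),
    sq_nonneg (σ 0 1), sq_nonneg (σ 0 0 - β), sq_nonneg (σ 1 1 - β)]

end IsCoerciveWith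

end Matrix

theorem Complex.norm_add_mul_I_div_ofReal_le {x y r D : ℝ} (hr : 0 ≤ r) (hD : 0 < D)
    (h : x ^ 2 + y ^ 2 ≤ r ^ 2) : ‖(x + y * I) / (D : ℂ)‖ ≤ r / D := by
  rw [norm_div, Complex.norm_of_nonneg hD.le, norm_add_mul_I]
  gcongr
  exact Real.sqrt_le_sqrt h |>.trans_eq (Real.sqrt_sq hr)

section Dilatations

variable {α β : ℝ} {σ : Matrix (Fin 2) (Fin 2) ℝ}

theorem norm_muDil_le (h : IsCoerciveWith α σ) (hD : 0 < 1 + σ.trace + σ.det) :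
    ‖muDil σ‖ ≤ (σ.trace - 2 * α) / (1 + σ.trace + σ.det) := by
  have hμ : muDil σ = ((σ 1 1 - σ 0 0 : ℝ) + (-(σ 0 1 + σ 1 0) : ℝ) * I) /
      ((1 + σ.trace + σ.det : ℝ) : ℂ) := by
    rw [muDil]; push_cast; ring
  have h₀ := h.le_apply_self 0
  have h₁ := h.le_apply_self 1
  rw [hμ, trace_fin_two]
  refine Complex.norm_add_mul_I_div_ofReal_le (by linarith) (by rwa [← trace_fin_two]) ?_
  nlinarith [h.sq_offDiag_add_le]

theorem norm_nuDil_le (hα : 0 ≤ α) (h : IsCoerciveWith α σ) (hD : 0 < 1 + σ.trace + σ.det) :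
    ‖nuDil σ‖ ≤ (1 + σ.det) / (1 + σ.trace + σ.det) := by
  have hν : nuDil σ = ((1 - σ.det : ℝ) + (σ 0 1 - σ 1 0 : ℝ) * I) /
      ((1 + σ.trace + σ.det : ℝ) : ℂ) := by
    rw [nuDil]; push_cast; ring
  rw [hν]
  refine Complex.norm_add_mul_I_div_ofReal_le ?_ hD ?_ <;>
    nlinarith [h.sq_offDiag_sub_add_le_det hα]

theorem norm_muDil_add_norm_nuDil_le (hα : 0 < α) (hβ : 0 < β) (h : IsCoerciveWith α σ)
    (hinv : IsCoerciveWith β⁻¹ σ⁻¹) :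
    ‖muDil σ‖ + ‖nuDil σ‖ ≤ 1 - 2 * α / (1 + β) ^ 2 := by
  have hdet := h.det_pos hα
  have hD : 0 < 1 + σ.trace + σ.det := by
    rw [trace_fin_two]; linarith [h.le_apply_self 0, h.le_apply_self 1]
  calc ‖muDil σ‖ + ‖nuDil σ‖
      ≤ (σ.trace - 2 * α) / (1 + σ.trace + σ.det) + (1 + σ.det) / (1 + σ.trace + σ.det) :=
        add_le_add (norm_muDil_le h hD) (norm_nuDil_le hα.le h hD)
    _ = 1 - 2 * α / (1 + σ.trace + σ.det) := by field_simp; ring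
    _ ≤ 1 - 2 * α / (1 + β) ^ 2 := by
        gcongr
        exact hinv.one_add_trace_add_det_le_of_inv hβ hdet.ne'.isUnit

end Dilatations

/-- For elliptic `σ` there is `K ≥ 1`, depending only on `α` and `β`, such that
`|μ| + |ν| ≤ (K-1)/(K+1)`. -/
theorem dilatations_elliptic_bound (α β : ℝ) (hα : 0 < α) (hβ : 0 < β) :
    ∃ K : ℝ, 1 ≤ K ∧
      ∀ σ : Matrix (Fin 2) (Fin 2) ℝ,
        (∀ ξ : Fin 2 → ℝ, α * (ξ ⬝ᵥ ξ) ≤ (σ *ᵥ ξ) ⬝ᵥ ξ) →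
        (∀ ξ : Fin 2 → ℝ, β⁻¹ * (ξ ⬝ᵥ ξ) ≤ (σ⁻¹ *ᵥ ξ) ⬝ᵥ ξ) →
        ‖muDil σ‖ + ‖nuDil σ‖ ≤ (K - 1) / (K + 1) := by
  set K := max 1 ((1 + β) ^ 2 / α - 1)
  have hK : (1 + β) ^ 2 ≤ α * (K + 1) := by
    rw [← div_le_iff₀' hα]
    linarith [le_max_right 1 ((1 + β) ^ 2 / α - 1)]
  refine ⟨K, le_max_left _ _, fun σ h hinv => ?_⟩
  have hK1 : 0 < K + 1 := by linarith [le_max_left 1 ((1 + β) ^ 2 / α - 1)]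
  calc ‖muDil σ‖ + ‖nuDil σ‖ ≤ 1 - 2 * α / (1 + β) ^ 2 :=
        norm_muDil_add_norm_nuDil_le hα hβ h hinv
    _ ≤ 1 - 2 / (K + 1) := by
        rw [sub_le_sub_iff_left, div_le_div_iff₀ hK1 (by positivity)]
        linarith
    _ = (K - 1) / (K + 1) := by field_simp; ring
end

section
/- Let Ω ⊂ ℝ² be open and simply connected, let σ ∈ M(α,β,Ω) be a C¹ symmetric matrix-valued map with det σ(x) = 1 for all x ∈ Ω, and let u ∈ C²(Ω) satisfy div(σ∇u) = 0 classically in Ω. Let ũ ∈ C¹(Ω) be the stream function of u, i.e. ∇ũ = Jσ∇u. Then ũ also satisfies div(σ∇ũ) = 0 in Ω; hence U = (u, ũ) is a σ-harmonic mapping. -/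
open Matrix

/-- Gradient of a scalar function on `ℝ²` (realized as `Fin 2 → ℝ`). -/
noncomputable def grad (f : (Fin 2 → ℝ) → ℝ) (x : Fin 2 → ℝ) : Fin 2 → ℝ :=
  fun i => fderiv ℝ f x (Pi.single i 1)

/-- Divergence of a planar vector field. -/
noncomputable def div2 (V : (Fin 2 → ℝ) → (Fin 2 → ℝ)) (x : Fin 2 → ℝ) : ℝ :=
  ∑ i, fderiv ℝ (fun y => V y i) x (Pi.single i 1)

/-- The counterclockwise rotation by 90 degrees. -/
def Jmat : Matrix (Fin 2) (Fin 2) ℝ := !![0, -1; 1, 0]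

/-- The class `M(α,β,Ω)` (pointwise version, suited to continuous `σ`). -/
def InMClass (α β : ℝ) (Ω : Set (Fin 2 → ℝ))
    (σ : (Fin 2 → ℝ) → Matrix (Fin 2) (Fin 2) ℝ) : Prop :=
  ∀ x ∈ Ω, (∀ ξ : Fin 2 → ℝ, α * (ξ ⬝ᵥ ξ) ≤ (σ x *ᵥ ξ) ⬝ᵥ ξ) ∧
    (∀ ξ : Fin 2 → ℝ, β⁻¹ * (ξ ⬝ᵥ ξ) ≤ ((σ x)⁻¹ *ᵥ ξ) ⬝ᵥ ξ)

/-! For symmetric `σ` with `det σ = 1` one has `σ J σ = J`, so `σ ∇ũ = σ J σ ∇u = J ∇u`; and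
`div (J ∇u) = ∂₂∂₁u - ∂₁∂₂u` vanishes by the symmetry of second derivatives. -/

lemma Matrix.mul_Jmat_mul_self_of_isSymm_of_det_eq_one (M : Matrix (Fin 2) (Fin 2) ℝ)
    (hs : Mᵀ = M) (hd : M.det = 1) : M * Jmat * M = Jmat := by
  have hsymm : M 1 0 = M 0 1 := congrFun (congrFun hs 0) 1
  rw [Matrix.det_fin_two, hsymm] at hd
  ext i j
  fin_cases i <;> fin_cases j <;>
    simp [Jmat, Matrix.mul_apply, Fin.sum_univ_two, hsymm] <;> linarith

lemma fderiv_fderiv_apply_const {E F : Type*} [NormedAddCommGroup E] [NormedSpace ℝ E]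
    [NormedAddCommGroup F] [NormedSpace ℝ F] {f : E → F} {x : E}
    (hf : DifferentiableAt ℝ (fderiv ℝ f) x) (v w : E) :
    fderiv ℝ (fun y => fderiv ℝ f y w) x v = fderiv ℝ (fderiv ℝ f) x v w := by
  simp [fderiv_clm_apply hf (differentiableAt_const w)]

lemma div2_congr_of_eventuallyEq {V W : (Fin 2 → ℝ) → (Fin 2 → ℝ)} {x : Fin 2 → ℝ}
    (h : V =ᶠ[nhds x] W) : div2 V x = div2 W x := by
  unfold div2
  congr! 2 with i
  exact (h.fun_comp (· i)).fderiv_eq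

lemma Jmat_mulVec (ξ : Fin 2 → ℝ) : Jmat *ᵥ ξ = ![-ξ 1, ξ 0] := by
  ext i; fin_cases i <;> simp [Jmat, Matrix.mulVec, dotProduct, Fin.sum_univ_two]

lemma div2_Jmat_mulVec_grad {u : (Fin 2 → ℝ) → ℝ} {x : Fin 2 → ℝ}
    (hu : ContDiffAt ℝ 2 u x) : div2 (fun y => Jmat *ᵥ grad u y) x = 0 := by
  have hd2 : DifferentiableAt ℝ (fderiv ℝ u) x :=
    (hu.fderiv_right (m := 1) le_rfl).differentiableAt one_ne_zero
  have hsymm := hu.isSymmSndFDerivAt (by simp) (Pi.single 0 1) (Pi.single 1 1)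
  simp only [div2, Fin.sum_univ_two, Jmat_mulVec, grad]
  simp [fderiv_fun_neg, fderiv_fderiv_apply_const hd2, hsymm]

theorem stream_function_is_sigma_harmonic_general
    (Ω : Set (Fin 2 → ℝ)) (hΩ : IsOpen Ω)
    (σ : (Fin 2 → ℝ) → Matrix (Fin 2) (Fin 2) ℝ)
    (hσsymm : ∀ x ∈ Ω, (σ x)ᵀ = σ x)
    (hσdet : ∀ x ∈ Ω, (σ x).det = 1)
    (u : (Fin 2 → ℝ) → ℝ) (hu : ContDiffOn ℝ 2 u Ω)
    (v : (Fin 2 → ℝ) → ℝ)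
    (hstream : ∀ x ∈ Ω, grad v x = Jmat *ᵥ (σ x *ᵥ grad u x)) :
    ∀ x ∈ Ω, div2 (fun y => σ y *ᵥ grad v y) x = 0 := by
  intro x hx
  have hflux : ∀ y ∈ Ω, σ y *ᵥ grad v y = Jmat *ᵥ grad u y := fun y hy => by
    rw [hstream y hy, mulVec_mulVec, mulVec_mulVec,
      (σ y).mul_Jmat_mul_self_of_isSymm_of_det_eq_one (hσsymm y hy) (hσdet y hy)]
  rw [div2_congr_of_eventuallyEq (Filter.eventually_of_mem (hΩ.mem_nhds hx) hflux)]
  exact div2_Jmat_mulVec_grad (hu.contDiffAt (hΩ.mem_nhds hx))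

/-- If `σ` is symmetric with `det σ = 1`, then the stream function `ũ` of a
`σ`-harmonic function `u` is itself `σ`-harmonic, so `U = (u, ũ)` is a
`σ`-harmonic mapping. -/
theorem stream_function_is_sigma_harmonic
    (α β : ℝ) (hα : 0 < α) (hβ : 0 < β)
    (Ω : Set (Fin 2 → ℝ)) (hΩ : IsOpen Ω) (hsc : SimplyConnectedSpace ↥Ω)
    (σ : (Fin 2 → ℝ) → Matrix (Fin 2) (Fin 2) ℝ)
    (hσC1 : ∀ i j, ContDiffOn ℝ 1 (fun x => σ x i j) Ω)
    (hσM : InMClass α β Ω σ)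
    (hσsymm : ∀ x ∈ Ω, (σ x)ᵀ = σ x)
    (hσdet : ∀ x ∈ Ω, (σ x).det = 1)
    (u : (Fin 2 → ℝ) → ℝ) (hu : ContDiffOn ℝ 2 u Ω)
    (hdiv : ∀ x ∈ Ω, div2 (fun y => σ y *ᵥ grad u y) x = 0)
    (v : (Fin 2 → ℝ) → ℝ) (hv : ContDiffOn ℝ 1 v Ω)
    (hstream : ∀ x ∈ Ω, grad v x = Jmat *ᵥ (σ x *ᵥ grad u x)) :
    ∀ x ∈ Ω, div2 (fun y => σ y *ᵥ grad v y) x = 0 :=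
  stream_function_is_sigma_harmonic_general Ω hΩ σ hσsymm hσdet u hu v hstream
end

section
/- Consider the map U : ℂ → ℂ given (in complex notation) by U(z) = z + (1/2) z̄². Then U is injective on the closed unit disk B̄(0,1), its Jacobian determinant satisfies det DU(z) = 1 − |z|² for every z ∈ ℂ, so det DU > 0 in the open unit disk and det DU vanishes identically on the unit circle ∂B(0,1); consequently the dilatation d(U) = |DU|²/(2 det DU) tends to +∞ as z approaches any point of ∂B(0,1). -/
/-!
Since `z̄² - w̄² = conj ((z - w)(z + w))`, the equation `U z = U w` gives
`|z - w| = |z - w| |z + w| / 2`, while on the closed unit disk `|z + w| < 2` unless `z = w`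
by strict convexity of the norm.  The real derivative of `U` at `z` is `v ↦ v + z̄ v̄`, with
matrix `[[1 + x, -y], [-y, 1 - x]]`: its determinant is `1 - |z|²` and its squared norm
`2 (1 + |z|²)`, so `d(U) = (1 + |z|²) / (1 - |z|²)`, which blows up as `|z| → 1⁻`.
-/

open Matrix Complex Filter

/-- The real `2×2` Jacobian matrix of a map `ℂ → ℂ`, viewed as a map of `ℝ²`. -/
noncomputable def JacC (U : ℂ → ℂ) (z : ℂ) : Matrix (Fin 2) (Fin 2) ℝ :=
  !![fderiv ℝ (fun w => (U w).re) z 1, fderiv ℝ (fun w => (U w).re) z Complex.I;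
     fderiv ℝ (fun w => (U w).im) z 1, fderiv ℝ (fun w => (U w).im) z Complex.I]

/-- The dilatation `d(U) = |DU|²/(2 det DU)` of a planar mapping. -/
noncomputable def dilat (U : ℂ → ℂ) (z : ℂ) : ℝ :=
  (JacC U z * (JacC U z)ᵀ).trace / (2 * (JacC U z).det)

open Topology ComplexConjugate

noncomputable section

theorem JacC_eq_of_hasFDerivAt {U : ℂ → ℂ} {L : ℂ →L[ℝ] ℂ} {z : ℂ} (hU : HasFDerivAt U L z) :
    JacC U z = !![(L 1).re, (L I).re; (L 1).im, (L I).im] := by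
  have hre : fderiv ℝ (fun w => (U w).re) z = reCLM.comp L := (reCLM.hasFDerivAt.comp z hU).fderiv
  have him : fderiv ℝ (fun w => (U w).im) z = imCLM.comp L := (imCLM.hasFDerivAt.comp z hU).fderiv
  rw [JacC, hre, him]
  rfl

theorem trace_mul_transpose_fin_two {R : Type*} [CommRing R] (a b c d : R) :
    (!![a, b; c, d] * !![a, b; c, d]ᵀ).trace = a ^ 2 + b ^ 2 + c ^ 2 + d ^ 2 := by
  rw [trace_fin_two]
  simp [mul_apply, Fin.sum_univ_two]
  ring

theorem norm_add_lt_two_of_ne {E : Type*} [NormedAddCommGroup E] [NormedSpace ℝ E]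
    [StrictConvexSpace ℝ E] {x y : E} (hx : ‖x‖ ≤ 1) (hy : ‖y‖ ≤ 1) (hne : x ≠ y) :
    ‖x + y‖ < 2 := by
  have h := norm_combo_lt_of_ne hx hy hne (a := 1 / 2) (b := 1 / 2) (by norm_num) (by norm_num)
    (by norm_num)
  rw [← smul_add, norm_smul] at h
  norm_num at h
  linarith

theorem tendsto_one_add_sq_div_one_sub_sq :
    Tendsto (fun r : ℝ => (1 + r ^ 2) / (1 - r ^ 2)) (𝓝[<] 1) atTop := by
  have hnum : Tendsto (fun r : ℝ => 1 + r ^ 2) (𝓝[<] 1) (𝓝 2) :=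
    ((by fun_prop : Continuous fun r : ℝ => 1 + r ^ 2).tendsto' 1 2 (by norm_num)).mono_left
      nhdsWithin_le_nhds
  have hden : Tendsto (fun r : ℝ => 1 - r ^ 2) (𝓝[<] 1) (𝓝[>] 0) := by
    refine tendsto_nhdsWithin_of_tendsto_nhds_of_eventually_within _ ?_ ?_
    · exact ((by fun_prop : Continuous fun r : ℝ => 1 - r ^ 2).tendsto' 1 0
        (by norm_num)).mono_left nhdsWithin_le_nhds
    · filter_upwards [Ioo_mem_nhdsLT one_pos] with r ⟨hr0, hr1⟩
      exact sub_pos.mpr (pow_lt_one₀ hr0.le hr1 two_ne_zero)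
  simpa only [div_eq_mul_inv, Function.comp_def] using
    hnum.pos_mul_atTop two_pos (tendsto_inv_nhdsGT_zero.comp hden)

theorem tendsto_norm_nhdsWithin_ball_of_mem_sphere {E : Type*} [SeminormedAddCommGroup E] {p : E}
    (hp : p ∈ Metric.sphere (0 : E) 1) :
    Tendsto norm (𝓝[Metric.ball 0 1] p) (𝓝[<] 1) := by
  have h := continuous_norm.continuousWithinAt.tendsto_nhdsWithin
    (s := Metric.ball (0 : E) 1) (x := p) (t := Set.Iio 1) fun z hz => mem_ball_zero_iff.mp hz
  rwa [mem_sphere_zero_iff_norm.mp hp] at h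

def hypocycloidMap (z : ℂ) : ℂ := z + (1 / 2 : ℂ) * conj z ^ 2

theorem hypocycloidMap_sub (z w : ℂ) :
    hypocycloidMap z - hypocycloidMap w = z - w + (1 / 2 : ℂ) * conj ((z - w) * (z + w)) := by
  simp only [hypocycloidMap, map_mul, map_sub, map_add]
  ring

theorem injOn_hypocycloidMap : Set.InjOn hypocycloidMap (Metric.closedBall 0 1) := by
  intro z hz w hw hzw
  by_contra hne
  have hlt := norm_add_lt_two_of_ne (mem_closedBall_zero_iff.mp hz)
    (mem_closedBall_zero_iff.mp hw) hne
  have hpos : 0 < ‖z - w‖ := norm_pos_iff.mpr (sub_ne_zero.mpr hne)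
  have hsub : z - w = -((1 / 2 : ℂ) * conj ((z - w) * (z + w))) := by
    linear_combination hzw - hypocycloidMap_sub z w
  have hnorm : ‖z - w‖ = ‖z - w‖ * ‖z + w‖ / 2 := by
    calc ‖z - w‖ = ‖-((1 / 2 : ℂ) * conj ((z - w) * (z + w)))‖ := by rw [← hsub]
      _ = ‖z - w‖ * ‖z + w‖ / 2 := by
        rw [norm_neg, norm_mul, norm_conj, norm_mul]
        norm_num
        ring
  nlinarith

def hypocycloidDeriv (z : ℂ) : ℂ →L[ℝ] ℂ :=
  ContinuousLinearMap.id ℝ ℂ + conj z • (conjCLE : ℂ →L[ℝ] ℂ)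

theorem hasFDerivAt_hypocycloidMap (z : ℂ) :
    HasFDerivAt hypocycloidMap (hypocycloidDeriv z) z := by
  have hconj : HasFDerivAt (conj : ℂ → ℂ) (conjCLE : ℂ →L[ℝ] ℂ) z := conjCLE.hasFDerivAt
  refine ((hasFDerivAt_id z).add ((hconj.pow 2).const_mul (1 / 2 : ℂ))).congr_fderiv ?_
  ext v
  simp [hypocycloidDeriv]
  ring

theorem JacC_hypocycloidMap (z : ℂ) :
    JacC hypocycloidMap z = !![1 + z.re, -z.im; -z.im, 1 - z.re] := by
  rw [JacC_eq_of_hasFDerivAt (hasFDerivAt_hypocycloidMap z)]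
  congr 1
  simp [hypocycloidDeriv, sub_eq_add_neg]

theorem det_JacC_hypocycloidMap (z : ℂ) : (JacC hypocycloidMap z).det = 1 - ‖z‖ ^ 2 := by
  rw [JacC_hypocycloidMap, det_fin_two_of, Complex.sq_norm, normSq_apply]
  ring

theorem dilat_hypocycloidMap (z : ℂ) :
    dilat hypocycloidMap z = (1 + ‖z‖ ^ 2) / (1 - ‖z‖ ^ 2) := by
  have htrace :
      (1 + z.re) ^ 2 + (-z.im) ^ 2 + (-z.im) ^ 2 + (1 - z.re) ^ 2 = 2 * (1 + ‖z‖ ^ 2) := by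
    rw [Complex.sq_norm, normSq_apply]
    ring
  rw [dilat, det_JacC_hypocycloidMap, JacC_hypocycloidMap, trace_mul_transpose_fin_two, htrace,
    mul_div_mul_left _ _ two_ne_zero]

end

/-- The harmonic homeomorphism `U(z) = z + z̄²/2` of the closed unit disk:
it is injective on the closed disk, its Jacobian determinant equals `1 - |z|²`,
hence is positive on the open disk and vanishes identically on the unit circle,
and its dilatation blows up at every boundary point. -/
theorem hypocycloid_example :
    Set.InjOn (fun z : ℂ => z + (1 / 2 : ℂ) * (starRingEnd ℂ z) ^ 2)
      (Metric.closedBall (0 : ℂ) 1) ∧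
    (∀ z : ℂ,
      (JacC (fun w => w + (1 / 2 : ℂ) * (starRingEnd ℂ w) ^ 2) z).det
        = 1 - ‖z‖ ^ 2) ∧
    (∀ z ∈ Metric.ball (0 : ℂ) 1,
      0 < (JacC (fun w => w + (1 / 2 : ℂ) * (starRingEnd ℂ w) ^ 2) z).det) ∧
    (∀ z ∈ Metric.sphere (0 : ℂ) 1,
      (JacC (fun w => w + (1 / 2 : ℂ) * (starRingEnd ℂ w) ^ 2) z).det = 0) ∧
    (∀ p ∈ Metric.sphere (0 : ℂ) 1,
      Tendsto (dilat (fun w => w + (1 / 2 : ℂ) * (starRingEnd ℂ w) ^ 2))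
        (nhdsWithin p (Metric.ball (0 : ℂ) 1)) atTop) := by
  rw [show (fun w : ℂ => w + (1 / 2 : ℂ) * (starRingEnd ℂ w) ^ 2) = hypocycloidMap from rfl]
  refine ⟨injOn_hypocycloidMap, det_JacC_hypocycloidMap, fun z hz => ?_, fun z hz => ?_,
    fun p hp => ?_⟩
  · rw [det_JacC_hypocycloidMap, sub_pos]
    exact pow_lt_one₀ (norm_nonneg z) (mem_ball_zero_iff.mp hz) two_ne_zero
  · rw [det_JacC_hypocycloidMap, mem_sphere_zero_iff_norm.mp hz, one_pow, sub_self]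
  · exact (tendsto_one_add_sq_div_one_sub_sq.comp
      (tendsto_norm_nhdsWithin_ball_of_mem_sphere hp)).congr fun z => (dilat_hypocycloidMap z).symm
end
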